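/- Let E = (E⁰, E¹, r, s) be a directed graph, c : E¹ → ℝ with c(e) > 0 for all e, β > 0, and τ : E⁰ → [0, ∞). Suppose that for every vertex v, Σ_{e ∈ r⁻¹(v)} c(e)^{−β} τ(s(e)) ≤ τ(v), where the sum is the (possibly infinite) unordered sum over all edges with range v. Then for every n ≥ 1 and every vertex v, Σ_{μ ∈ r⁻ⁿ(v)} c(μ)^{−β} τ(s(μ)) ≤ τ(v), where r⁻ⁿ(v) = {μ ∈ Eⁿ : r(μ) = v}. -/

import Mathlib

open scoped ComplexOrder

/-- A directed graph: vertex set `V`, edge set `E`, range and source maps. -/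
structure DirectedGraph (V : Type*) (E : Type*) where
  r : E → V
  s : E → V

namespace DirectedGraph

variable {V E : Type*}

/-- A finite path `μ = μ₁…μₙ` in a directed graph, recorded as the list of its
edges (in order) together with its range vertex; a path of length `0` is a single
vertex.  We require `s (μᵢ) = r (μᵢ₊₁)` and that the range vertex is `r (μ₁)`
when the path is nonempty. -/
structure Path (G : DirectedGraph V E) where
  rng : V
  edges : List E
  chain : edges.Chain' fun a b => G.s a = G.r b
  head_compat : ∀ e ∈ edges.head?, G.r e = rng

/-- The source `s(μ)` of a path. -/
def Path.src {G : DirectedGraph V E} (μ : G.Path) : V :=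
  μ.edges.getLast?.elim μ.rng G.s

/-- The length `|μ|` of a path. -/
def Path.length {G : DirectedGraph V E} (μ : G.Path) : ℕ := μ.edges.length

/-- The length-`0` path at a vertex. -/
def Path.ofVertex (G : DirectedGraph V E) (v : V) : G.Path :=
  ⟨v, [], by exact List.IsChain.nil, by simp⟩

/-- `ρ.IsComp μ ν` says that `ρ` is the concatenation `μν` (so in particular
`s(μ) = r(ν)`). -/
def Path.IsComp {G : DirectedGraph V E} (ρ μ ν : G.Path) : Prop :=
  μ.src = ν.rng ∧ ρ.edges = μ.edges ++ ν.edges ∧ ρ.rng = μ.rng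

/-- A vertex is singular if it receives no edges or infinitely many edges. -/
def Singular (G : DirectedGraph V E) (v : V) : Prop :=
  {e | G.r e = v} = ∅ ∨ {e | G.r e = v}.Infinite

end DirectedGraph

/-- A Cuntz–Krieger `E`-family in a `*`-algebra `B`: mutually orthogonal
projections `P v` and partial isometries `S e` with mutually orthogonal ranges,
subject to the Cuntz–Krieger relations. -/
structure CKFamily {V E : Type*} (G : DirectedGraph V E) (B : Type*)
    [NonUnitalRing B] [StarRing B] [PartialOrder B] where
  P : V → B
  S : E → B
  P_sa : ∀ v, star (P v) = P v
  P_idem : ∀ v, P v * P v = P v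
  P_orth : ∀ v w, v ≠ w → P v * P w = 0
  S_partialIsometry : ∀ e, S e * star (S e) * S e = S e
  range_orth : ∀ e f, e ≠ f → S e * star (S e) * (S f * star (S f)) = 0
  ck1 : ∀ e, star (S e) * S e = P (G.s e)
  ck2 : ∀ e, S e * star (S e) ≤ P (G.r e)
  ck3 : ∀ v (h : {e | G.r e = v}.Finite), {e | G.r e = v}.Nonempty →
    P v = ∑ e ∈ h.toFinset, S e * star (S e)

namespace CKFamily

variable {V E B : Type*} {G : DirectedGraph V E}

section Algebraic

variable [NonUnitalRing B] [StarRing B] [PartialOrder B]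

/-- `s_μ = s_{μ₁} ⋯ s_{μₙ}` for a path `μ`, with `s_v = p_v` for a vertex. -/
def sP (F : CKFamily G B) (μ : G.Path) : B :=
  match μ.edges with
  | [] => F.P μ.rng
  | e :: es => es.foldl (fun b f => b * F.S f) (F.S e)

end Algebraic

section CStar

variable [NonUnitalNormedRing B] [StarRing B] [PartialOrder B]
  [NormedSpace ℂ B] [IsScalarTower ℂ B B] [SMulCommClass ℂ B B] [StarModule ℂ B]

/-- The submodule `F_k` = closed span of `{s_μ s_ν* : μ, ν ∈ Eᵏ, s(μ) = s(ν)}`. -/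
def FkSub (F : CKFamily G B) (k : ℕ) : Submodule ℂ B :=
  (Submodule.span ℂ {x : B | ∃ μ ν : G.Path, μ.length = k ∧ ν.length = k ∧
    μ.src = ν.src ∧ x = F.sP μ * star (F.sP ν)}).topologicalClosure

/-- The set `F_k`. -/
def Fk (F : CKFamily G B) (k : ℕ) : Set B := ↑(F.FkSub k)

/-- `ℰ_k` = closed span of `{s_μ s_ν* : μ, ν ∈ Eᵏ, s(μ) = s(ν) singular}`. -/
def Ek (F : CKFamily G B) (k : ℕ) : Set B :=
  ↑((Submodule.span ℂ {x : B | ∃ μ ν : G.Path, μ.length = k ∧ ν.length = k ∧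
    μ.src = ν.src ∧ G.Singular μ.src ∧
    x = F.sP μ * star (F.sP ν)}).topologicalClosure)

/-- `C_k = F_0 + ⋯ + F_k`. -/
def Ck (F : CKFamily G B) (k : ℕ) : Set B :=
  {x : B | ∃ f : Fin (k + 1) → B, (∀ i : Fin (k + 1), f i ∈ F.Fk i) ∧ x = ∑ i, f i}

/-- The submodule given by the closed span of
`{s_μ s_ν* : μ, ν ∈ E*, |μ| = |ν|, s(μ) = s(ν)}` (the "core"). -/
def coreSub (F : CKFamily G B) : Submodule ℂ B :=
  (Submodule.span ℂ {x : B | ∃ μ ν : G.Path, μ.length = ν.length ∧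
    μ.src = ν.src ∧ x = F.sP μ * star (F.sP ν)}).topologicalClosure

/-- A gauge action for a Cuntz–Krieger family: a point-norm continuous action of
the circle group by `*`-automorphisms fixing the `P v` and scaling the `S e`. -/
structure GaugeAction (F : CKFamily G B) where
  γ : Circle → B →L[ℂ] B
  map_one : γ 1 = ContinuousLinearMap.id ℂ B
  map_mul : ∀ z w, γ (z * w) = (γ z).comp (γ w)
  mul_hom : ∀ z (x y : B), γ z (x * y) = γ z x * γ z y
  star_hom : ∀ z (x : B), γ z (star x) = star (γ z x)
  cont : ∀ x : B, Continuous fun z => γ z x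
  gauge_P : ∀ z v, γ z (F.P v) = F.P v
  gauge_S : ∀ z e, γ z (F.S e) = (z : ℂ) • F.S e

/-- The fixed point algebra of a gauge action. -/
def GaugeAction.fixed {F : CKFamily G B} (γ : GaugeAction F) : Set B :=
  {a : B | ∀ z, γ.γ z a = a}

/-- `B` is generated, as a C*-algebra, by the family. -/
def Generates (F : CKFamily G B) : Prop :=
  closure (↑(NonUnitalStarAlgebra.adjoin ℂ
    (Set.range F.P ∪ Set.range F.S)) : Set B) = Set.univ

/-- The universality hypotheses: all vertex projections are nonzero, `B` is
generated by the family, and `B` carries a gauge action. -/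
def IsUniversal (F : CKFamily G B) : Prop :=
  (∀ v, F.P v ≠ 0) ∧ F.Generates ∧ Nonempty (GaugeAction F)

end CStar

end CKFamily

section States

variable {B : Type*} [NonUnitalNormedRing B] [StarRing B] [PartialOrder B]
  [NormedSpace ℂ B]

/-- A state: a positive continuous linear functional of norm one. -/
def IsStateOn (φ : B →L[ℂ] ℂ) : Prop :=
  ‖φ‖ = 1 ∧ ∀ x : B, 0 ≤ x → 0 ≤ φ x

end States

/-- `c(μ) = c(μ₁) ⋯ c(μₙ)`, with `c(v) = 1` for a vertex. -/
def cPath {V E : Type*} {G : DirectedGraph V E} (c : E → ℝ) (μ : G.Path) : ℝ :=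
  (μ.edges.map c).prod

/-- The algebraic `(σᶜ, β)`-KMS condition, checked on spanning elements. -/
def KMSCondition {V E B : Type*} {G : DirectedGraph V E}
    [NonUnitalNormedRing B] [StarRing B] [PartialOrder B] [NormedSpace ℂ B]
    (F : CKFamily G B) (c : E → ℝ) (β : ℝ) (φ : B →L[ℂ] ℂ) : Prop :=
  ∀ μ ν α η : G.Path, μ.src = ν.src → α.src = η.src →
    φ (F.sP μ * star (F.sP ν) * (F.sP α * star (F.sP η))) =
      Complex.ofReal (cPath c μ ^ (-β) * cPath c ν ^ β) *
        φ (F.sP α * star (F.sP η) * (F.sP μ * star (F.sP ν)))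

/-!
Splitting off the first edge identifies the paths of length `n + 1` into `v` with the pairs
`(e, μ)` of an edge `e` into `v` and a path `μ` of length `n` into `s(e)`. In `ℝ≥0∞`, where
unordered sums can be reindexed along this bijection and iterated freely, the inequality for
paths of length `n + 1` follows from the one for length `n` and the one-step inequality; the
case `n = 0` is an equality.
-/

theorem ENNReal.ofReal_list_prod_map {ι : Type*} (l : List ι) (f : ι → ℝ)
    (hf : ∀ i ∈ l, 0 ≤ f i) :
    ENNReal.ofReal (l.map f).prod = (l.map fun i => ENNReal.ofReal (f i)).prod := by
  induction l with
  | nil => simp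
  | cons i l ih =>
    simp only [List.map_cons, List.prod_cons, List.forall_mem_cons] at hf ⊢
    rw [ENNReal.ofReal_mul hf.1, ih hf.2]

theorem cPath_nonneg {V E : Type*} {G : DirectedGraph V E} {c : E → ℝ}
    (hc : ∀ e, 0 ≤ c e) (μ : G.Path) : 0 ≤ cPath c μ :=
  List.prod_nonneg (by simpa using fun e _ => hc e)

theorem ofReal_cPath_rpow {V E : Type*} {G : DirectedGraph V E} {c : E → ℝ}
    (hc : ∀ e, 0 ≤ c e) (r : ℝ) (μ : G.Path) :
    ENNReal.ofReal (cPath c μ ^ r) =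
      (μ.edges.map fun e => ENNReal.ofReal (c e ^ r)).prod := by
  rw [cPath, ← Real.list_prod_map_rpow' _ _ (fun e _ => hc e),
    ENNReal.ofReal_list_prod_map _ _ (fun e _ => Real.rpow_nonneg (hc e) r)]

namespace DirectedGraph

variable {V E : Type*} {G : DirectedGraph V E}

theorem Path.ext {μ ν : G.Path} (hrng : μ.rng = ν.rng) (hedges : μ.edges = ν.edges) :
    μ = ν := by
  cases μ; cases ν; simp_all

theorem Path.eq_ofVertex_of_length_eq_zero {μ : G.Path} (h : μ.length = 0) :
    μ = Path.ofVertex G μ.rng :=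
  Path.ext rfl (List.length_eq_zero_iff.mp h)

def Path.cons (e : E) (μ : G.Path) (h : μ.rng = G.s e) : G.Path where
  rng := G.r e
  edges := e :: μ.edges
  chain := List.isChain_cons.mpr
    ⟨fun f hf => ((μ.head_compat f hf).trans h).symm, μ.chain⟩
  head_compat := by simp

@[simp]
theorem Path.edges_cons (e : E) (μ : G.Path) (h : μ.rng = G.s e) :
    (Path.cons e μ h).edges = e :: μ.edges :=
  rfl

@[simp]
theorem Path.src_cons (e : E) (μ : G.Path) (h : μ.rng = G.s e) :
    (Path.cons e μ h).src = μ.src := by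
  rcases hμ : μ.edges with _ | ⟨f, fs⟩
  · simp [Path.src, Path.cons, hμ, h]
  · simp only [Path.src, Path.cons, hμ]
    rw [List.getLast?_eq_some_getLast (List.cons_ne_nil f fs)]
    rfl

theorem Path.cons_inj {e f : E} {μ ν : G.Path} {hμ : μ.rng = G.s e} {hν : ν.rng = G.s f}
    (h : Path.cons e μ hμ = Path.cons f ν hν) : e = f ∧ μ = ν := by
  obtain ⟨rfl, hedges⟩ := List.cons_eq_cons.mp (congrArg Path.edges h)
  exact ⟨rfl, Path.ext (hμ.trans hν.symm) hedges⟩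

theorem Path.exists_eq_cons {μ : G.Path} {n : ℕ} (hμ : μ.length = n + 1) :
    ∃ e μ' h, G.r e = μ.rng ∧ μ'.length = n ∧ μ = Path.cons e μ' h := by
  rcases hedges : μ.edges with _ | ⟨e, es⟩
  · simp [Path.length, hedges] at hμ
  · have hchain := List.isChain_cons.mp (hedges ▸ μ.chain)
    have he : G.r e = μ.rng := μ.head_compat e (by simp [hedges])
    refine ⟨e, ⟨G.s e, es, hchain.2, fun f hf => (hchain.1 f hf).symm⟩, rfl, he, ?_,
      Path.ext he.symm hedges⟩
    simpa [Path.length, hedges] using hμ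

noncomputable def Path.consEquiv (v : V) (n : ℕ) :
    (Σ e : {e : E // G.r e = v}, {μ : G.Path // μ.length = n ∧ μ.rng = G.s e}) ≃
      {μ : G.Path // μ.length = n + 1 ∧ μ.rng = v} :=
  Equiv.ofBijective (fun p => ⟨Path.cons p.1.1 p.2.1 p.2.2.2, by simp [Path.length, Path.cons,
      ← p.2.2.1], p.1.2⟩) <| by
    constructor
    · rintro ⟨⟨e, he⟩, ⟨μ, hμ⟩⟩ ⟨⟨f, hf⟩, ⟨ν, hν⟩⟩ h
      have h' : Path.cons e μ hμ.2 = Path.cons f ν hν.2 := congrArg Subtype.val h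
      obtain ⟨rfl, rfl⟩ := Path.cons_inj h'
      rfl
    · rintro ⟨μ, hlength, rfl⟩
      obtain ⟨e, μ', h, he, hlength', rfl⟩ := Path.exists_eq_cons hlength
      exact ⟨⟨⟨e, he⟩, ⟨μ', hlength', h⟩⟩, rfl⟩

@[simp]
theorem Path.consEquiv_apply_coe {v : V} {n : ℕ}
    (p : Σ e : {e : E // G.r e = v}, {μ : G.Path // μ.length = n ∧ μ.rng = G.s e}) :
    (Path.consEquiv v n p : G.Path) = Path.cons p.1.1 p.2.1 p.2.2.2 :=
  rfl

open scoped ENNReal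

def IsSubinvariant (G : DirectedGraph V E) (w : E → ℝ≥0∞) (t : V → ℝ≥0∞) : Prop :=
  ∀ v, ∑' e : {e : E // G.r e = v}, w e * t (G.s e) ≤ t v

theorem IsSubinvariant.tsum_paths_le {w : E → ℝ≥0∞} {t : V → ℝ≥0∞}
    (h : G.IsSubinvariant w t) (n : ℕ) (v : V) :
    ∑' μ : {μ : G.Path // μ.length = n ∧ μ.rng = v},
      (μ.1.edges.map w).prod * t μ.1.src ≤ t v := by
  induction n generalizing v with
  | zero =>
    rw [tsum_eq_single ⟨Path.ofVertex G v, rfl, rfl⟩]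
    · simp [Path.ofVertex, Path.src]
    · rintro ⟨μ, hlength, rfl⟩ hne
      exact absurd (Subtype.ext (Path.eq_ofVertex_of_length_eq_zero hlength)) hne
  | succ n ih =>
    calc _ = ∑' (e : {e : E // G.r e = v})
              (μ : {μ : G.Path // μ.length = n ∧ μ.rng = G.s e}),
            w e * ((μ.1.edges.map w).prod * t μ.1.src) := by
          rw [← (Path.consEquiv v n).tsum_eq, ENNReal.tsum_sigma']
          simp only [Path.consEquiv_apply_coe, Path.edges_cons, Path.src_cons, List.map_cons,
            List.prod_cons, mul_assoc]
      _ = ∑' e : {e : E // G.r e = v}, w e *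
            ∑' μ : {μ : G.Path // μ.length = n ∧ μ.rng = G.s e},
              (μ.1.edges.map w).prod * t μ.1.src := by
          simp_rw [ENNReal.tsum_mul_left]
      _ ≤ ∑' e : {e : E // G.r e = v}, w e * t (G.s e) :=
          ENNReal.tsum_le_tsum fun e => by gcongr; exact ih _
      _ ≤ t v := h v

end DirectedGraph

theorem subinvariance_iterates_general {V E : Type*} (G : DirectedGraph V E)
    (c : E → ℝ) (hc : ∀ e, 0 < c e) (β : ℝ)
    (τ : V → ℝ)
    (h : ∀ v : V, ∑' e : {e : E // G.r e = v},
        ENNReal.ofReal (c e.1 ^ (-β) * τ (G.s e.1)) ≤ ENNReal.ofReal (τ v)) :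
    ∀ n : ℕ, 1 ≤ n → ∀ v : V,
      ∑' μ : {μ : G.Path // μ.length = n ∧ μ.rng = v},
        ENNReal.ofReal (cPath c μ.1 ^ (-β) * τ μ.1.src) ≤
      ENNReal.ofReal (τ v) := by
  have hc₀ : ∀ e, 0 ≤ c e := fun e => (hc e).le
  have hsub : G.IsSubinvariant (fun e => ENNReal.ofReal (c e ^ (-β)))
      (fun v => ENNReal.ofReal (τ v)) := fun v => by
    simpa only [ENNReal.ofReal_mul (Real.rpow_nonneg (hc₀ _) _)] using h v
  intro n _ v
  simpa only [ENNReal.ofReal_mul (Real.rpow_nonneg (cPath_nonneg hc₀ _) _),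
    ofReal_cPath_rpow hc₀] using hsub.tsum_paths_le n v

/-- if `∑_{e ∈ r⁻¹(v)} c(e)^{-β} τ(s(e)) ≤ τ(v)` for all `v`,
then `∑_{μ ∈ r⁻ⁿ(v)} c(μ)^{-β} τ(s(μ)) ≤ τ(v)` for all `n ≥ 1` and `v`. -/
theorem subinvariance_iterates {V E : Type*} (G : DirectedGraph V E)
    (c : E → ℝ) (hc : ∀ e, 0 < c e) (β : ℝ) (hβ : 0 < β)
    (τ : V → ℝ) (hτ : ∀ v, 0 ≤ τ v)
    (h : ∀ v : V, ∑' e : {e : E // G.r e = v},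
        ENNReal.ofReal (c e.1 ^ (-β) * τ (G.s e.1)) ≤ ENNReal.ofReal (τ v)) :
    ∀ n : ℕ, 1 ≤ n → ∀ v : V,
      ∑' μ : {μ : G.Path // μ.length = n ∧ μ.rng = v},
        ENNReal.ofReal (cPath c μ.1 ^ (-β) * τ μ.1.src) ≤
      ENNReal.ofReal (τ v) :=
  subinvariance_iterates_general G c hc β τ h
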